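/- Consider the generalized short-range model on any hypergraph G = ([N], E) with 0 ≤ β < ∞, under the discrete perturbation. If 0 ≤ t ≤ |E|^{−1}, then E⟨R(σ,τ)²⟩_t ≥ e^{−1} · E⟨R(σ¹,σ²)²⟩, where ⟨R(σ¹,σ²)²⟩ denotes the Gibbs average of the squared overlap of two independent replicas σ¹, σ² drawn from the unperturbed Gibbs measure G_{J,β}. -/

import Mathlib

open MeasureTheory ProbabilityTheory Real Finset

noncomputable section

/-! ### Basic objects: spins, Hermite polynomials, Gaussian measures -/

/-- The `±1` spin value attached to a Boolean. -/
def spin (b : Bool) : ℝ := if b then 1 else -1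

/-- Normalized Hermite polynomial `h_m = He_m / √(m!)`,
orthonormal w.r.t. the standard Gaussian measure. -/
def hermiteFn (m : ℕ) (x : ℝ) : ℝ :=
  Polynomial.aeval x (Polynomial.hermite m) / Real.sqrt (Nat.factorial m)

/-- The law of a family of i.i.d. standard Gaussians over a finite index set. -/
def gaussianPi (ι : Type*) [Fintype ι] : Measure (ι → ℝ) :=
  Measure.pi fun _ => gaussianReal 0 1

instance (ι : Type*) [Fintype ι] : IsProbabilityMeasure (gaussianPi ι) := by
  unfold gaussianPi; infer_instance

/-- Tensorized normalized Hermite polynomial `h_n(x) = ∏_e h_{n_e}(x_e)`. -/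
def hermiteProd {ι : Type*} [Fintype ι] (n : ι → ℕ) (x : ι → ℝ) : ℝ :=
  ∏ e, hermiteFn (n e) (x e)

/-- Continuous perturbation `J(t) = e^{-t} J + √(1-e^{-2t}) J'` of the disorder. -/
def contPerturb {ι : Type*} (t : ℝ) (J J' : ι → ℝ) : ι → ℝ := fun e =>
  Real.exp (-t) * J e + Real.sqrt (1 - Real.exp (-2 * t)) * J' e

/-- Discrete perturbation `J(t)_e = B_e J_e + (1-B_e) J'_e` of the disorder. -/
def discPerturb {ι : Type*} (J J' : ι → ℝ) (B : ι → Bool) : ι → ℝ := fun e =>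
  if B e then J e else J' e

/-- Bernoulli measure on `Bool` with success probability `p`. -/
def berBool (p : ℝ) : Measure Bool :=
  ENNReal.ofReal p • Measure.dirac true + ENNReal.ofReal (1 - p) • Measure.dirac false

instance (p : ℝ) : IsFiniteMeasure (berBool p) := by
  constructor
  simp only [berBool, Measure.coe_add, Pi.add_apply, Measure.smul_apply, smul_eq_mul,
    Measure.dirac_apply' _ MeasurableSet.univ, Set.indicator_univ, Pi.one_apply, mul_one]
  exact ENNReal.add_lt_top.mpr ⟨ENNReal.ofReal_lt_top, ENNReal.ofReal_lt_top⟩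

/-- Product Gaussian measure for a pair `(J, J')` of independent disorders. -/
def pairGauss (ι : Type*) [Fintype ι] : Measure ((ι → ℝ) × (ι → ℝ)) :=
  (gaussianPi ι).prod (gaussianPi ι)

/-- Product Gaussian measure for a triple of independent disorders. -/
def tripleGauss (ι : Type*) [Fintype ι] : Measure ((ι → ℝ) × (ι → ℝ) × (ι → ℝ)) :=
  (gaussianPi ι).prod ((gaussianPi ι).prod (gaussianPi ι))

/-- Law of `(J, J', B)`: two independent Gaussian disorders together with i.i.d.
Bernoulli(`p`) variables. -/
def tripleGaussBer (ι : Type*) [Fintype ι] (p : ℝ) :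
    Measure ((ι → ℝ) × (ι → ℝ) × (ι → Bool)) :=
  (gaussianPi ι).prod ((gaussianPi ι).prod (Measure.pi fun _ => berBool p))

/-! ### Spin models on hypergraphs -/

variable {N : ℕ}

/-- `σ_e = ∏_{v ∈ e} σ_v`. -/
def sigEdge (σ : Fin N → Bool) (e : Finset (Fin N)) : ℝ := ∏ v ∈ e, spin (σ v)

/-- Hamiltonian `H_J(σ) = Σ_e ρ_{|e|}(J_e) σ_e` of the short-range model. -/
def ham (Edges : Finset (Finset (Fin N))) (ρ : ℕ → ℝ → ℝ)
    (J : Finset (Fin N) → ℝ) (σ : Fin N → Bool) : ℝ :=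
  ∑ e ∈ Edges, ρ e.card (J e) * sigEdge σ e

/-- Gibbs average of an observable `f` for the Hamiltonian `H` at inverse temperature `β`. -/
def gibbs (β : ℝ) (H : (Fin N → Bool) → ℝ) (f : (Fin N → Bool) → ℝ) : ℝ :=
  (∑ σ : Fin N → Bool, f σ * Real.exp (β * H σ)) / ∑ σ : Fin N → Bool, Real.exp (β * H σ)

/-- Gibbs average of a two-replica observable `f(σ,τ)` where `σ, τ` are sampled from the
product of the Gibbs measures of the Hamiltonians `H₁`, `H₂`. -/
def gibbs2 (β : ℝ) (H₁ H₂ : (Fin N → Bool) → ℝ)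
    (f : (Fin N → Bool) → (Fin N → Bool) → ℝ) : ℝ :=
  (∑ σ : Fin N → Bool, ∑ τ : Fin N → Bool, f σ τ * Real.exp (β * H₁ σ + β * H₂ τ)) /
    ∑ σ : Fin N → Bool, ∑ τ : Fin N → Bool, Real.exp (β * H₁ σ + β * H₂ τ)

/-- Site overlap `R(σ,τ) = N⁻¹ Σ_i σ_i τ_i`. -/
def overlap (σ τ : Fin N → Bool) : ℝ := (∑ i, spin (σ i) * spin (τ i)) / N

/-- Fourier–Hermite coefficient `φ̂_{ij}(n) = E[⟨σ_i σ_j⟩ h_n(J)]` of the two-point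
correlation function. -/
def twoPointCoeff (Edges : Finset (Finset (Fin N))) (ρ : ℕ → ℝ → ℝ) (β : ℝ)
    (i j : Fin N) (n : Finset (Fin N) → ℕ) : ℝ :=
  ∫ ω, gibbs β (ham Edges ρ ω) (fun σ => spin (σ i) * spin (σ j)) * hermiteProd n ω
    ∂gaussianPi (Finset (Fin N))

/-- `E(n) = {e : n_e > 0}`. -/
def Esupp (n : Finset (Fin N) → ℕ) : Finset (Finset (Fin N)) :=
  Finset.univ.filter fun e => n e ≠ 0

/-- `V(n)`: the vertices covered by `E(n)`. -/
def Vsupp (n : Finset (Fin N) → ℕ) : Finset (Fin N) :=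
  (Esupp n).biUnion id

/-- Disorder-averaged two-replica observable under the continuous perturbation:
`E ⟨f(σ,τ)⟩_t` with `σ ~ G_J`, `τ ~ G_{J(t)}`. -/
def contExp (Edges : Finset (Finset (Fin N))) (ρ : ℕ → ℝ → ℝ) (β t : ℝ)
    (f : (Fin N → Bool) → (Fin N → Bool) → ℝ) : ℝ :=
  ∫ ω : (Finset (Fin N) → ℝ) × (Finset (Fin N) → ℝ),
    gibbs2 β (ham Edges ρ ω.1) (ham Edges ρ (contPerturb t ω.1 ω.2)) f
    ∂pairGauss (Finset (Fin N))

/-- Disorder-averaged two-replica observable under the discrete perturbation. -/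
def discExp (Edges : Finset (Finset (Fin N))) (ρ : ℕ → ℝ → ℝ) (β t : ℝ)
    (f : (Fin N → Bool) → (Fin N → Bool) → ℝ) : ℝ :=
  ∫ ω : (Finset (Fin N) → ℝ) × (Finset (Fin N) → ℝ) × (Finset (Fin N) → Bool),
    gibbs2 β (ham Edges ρ ω.1) (ham Edges ρ (discPerturb ω.1 ω.2.1 ω.2.2)) f
    ∂tripleGaussBer (Finset (Fin N)) (Real.exp (-t))

/-! ### Berge paths, distance, balls, cycles -/

/-- `(vs, es)` is a Berge path of length `ℓ` from `v` to `w` in the hypergraph `Edges`. -/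
def IsBergePath (Edges : Finset (Finset (Fin N))) (ℓ : ℕ)
    (vs : Fin (ℓ + 1) → Fin N) (es : Fin ℓ → Finset (Fin N)) (v w : Fin N) : Prop :=
  Function.Injective vs ∧ Function.Injective es ∧ (∀ k, es k ∈ Edges) ∧
    vs 0 = v ∧ vs (Fin.last ℓ) = w ∧
    ∀ k : Fin ℓ, vs k.castSucc ∈ es k ∧ vs k.succ ∈ es k

/-- Hypergraph (Berge) distance between two vertices, `∞` if there is no path. -/
def hdist (Edges : Finset (Finset (Fin N))) (v w : Fin N) : ℕ∞ :=
  sInf {d : ℕ∞ | ∃ (ℓ : ℕ) (vs : Fin (ℓ + 1) → Fin N) (es : Fin ℓ → Finset (Fin N)),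
    IsBergePath Edges ℓ vs es v w ∧ d = (ℓ : ℕ∞)}

open scoped Classical in
/-- The closed ball `B_r(v)` in the hypergraph distance. -/
def hball (Edges : Finset (Finset (Fin N))) (v : Fin N) (r : ℕ) : Finset (Fin N) :=
  Finset.univ.filter fun w => hdist Edges v w ≤ (r : ℕ∞)

/-- The hypergraph `Edges` contains a Berge cycle. -/
def HasBergeCycle (Edges : Finset (Finset (Fin N))) : Prop :=
  ∃ (ℓ : ℕ) (vs : Fin ℓ → Fin N) (es : Fin ℓ → Finset (Fin N)),
    2 ≤ ℓ ∧ Function.Injective vs ∧ Function.Injective es ∧ (∀ k, es k ∈ Edges) ∧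
      ∀ k : Fin ℓ, vs k ∈ es k ∧ vs (finRotate ℓ k) ∈ es k

/-- `min(d, c)` where `d ∈ ℕ∞` and `c ∈ ℝ` (equal to `c` if `d = ∞`). -/
def truncMin (d : ℕ∞) (c : ℝ) : ℝ :=
  if d = ⊤ then c else min (d.toNat : ℝ) c

/-! ### The diluted mixed p-spin random hypergraph -/

/-- Probability that a given hyperedge is present in the diluted model. -/
def edgeProb (α : ℕ → ℝ) (Δ N : ℕ) (e : Finset (Fin N)) : ℝ :=
  if 2 ≤ e.card ∧ e.card ≤ Δ then α e.card * N / (N.choose e.card) else 0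

/-- The law of the diluted mixed `p`-spin random hypergraph: each hyperedge `e` with
`2 ≤ |e| ≤ Δ` is present independently with probability `α_{|e|} N / C(N,|e|)`. -/
def graphMeasure (α : ℕ → ℝ) (Δ N : ℕ) : Measure (Finset (Fin N) → Bool) :=
  Measure.pi fun e => berBool (edgeProb α Δ N e)

/-- The (random) hyperedge set determined by the indicator `g`. -/
def edgesOf {N : ℕ} (Δ : ℕ) (g : Finset (Fin N) → Bool) : Finset (Finset (Fin N)) :=
  Finset.univ.filter fun e => g e = true ∧ 2 ≤ e.card ∧ e.card ≤ Δ

/-- `λ = Σ_p p(p-1) α_p`. -/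
def lamMix (α : ℕ → ℝ) (Δ : ℕ) : ℝ :=
  ∑ p ∈ Finset.Icc 2 Δ, (p : ℝ) * ((p : ℝ) - 1) * α p

/-- `λ' = Σ_p p(p-1)(p-2) α_p`. -/
def lamMix' (α : ℕ → ℝ) (Δ : ℕ) : ℝ :=
  ∑ p ∈ Finset.Icc 2 Δ, (p : ℝ) * ((p : ℝ) - 1) * ((p : ℝ) - 2) * α p

/-- The exploration (breadth-first search) process `(R_t, I_t, S_t, E_t)` of a hypergraph
started at the vertex `i`. -/
def explore {N : ℕ} (Edges : Finset (Finset (Fin N))) (i : Fin N) :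
    ℕ → Finset (Fin N) × Finset (Fin N) × Finset (Fin N) × Finset (Finset (Fin N))
  | 0 => (∅, {i}, Finset.univ.erase i, ∅)
  | t + 1 =>
      let P := explore Edges i t
      let Enew := Edges.filter fun e => (e ∩ P.2.1).Nonempty ∧ e ∩ P.1 = ∅
      (P.1 ∪ P.2.1, Enew.biUnion fun e => e ∩ P.2.2.1,
        P.2.2.1 \ Enew.biUnion fun e => e ∩ P.2.2.1, Enew)

/-- The set `I_t` of newly explored vertices at step `t`. -/
def Iset {N : ℕ} (Edges : Finset (Finset (Fin N))) (i : Fin N) (t : ℕ) : Finset (Fin N) :=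
  (explore Edges i t).2.1

/-- Disorder-and-graph-averaged two-replica observable under the continuous perturbation
in the diluted model. -/
def dilContExp (α : ℕ → ℝ) (Δ N : ℕ) (ρ : ℕ → ℝ → ℝ) (β t : ℝ)
    (f : (Fin N → Bool) → (Fin N → Bool) → ℝ) : ℝ :=
  ∫ ω : (Finset (Fin N) → Bool) × (Finset (Fin N) → ℝ) × (Finset (Fin N) → ℝ),
    gibbs2 β (ham (edgesOf Δ ω.1) ρ ω.2.1)
      (ham (edgesOf Δ ω.1) ρ (contPerturb t ω.2.1 ω.2.2)) f
    ∂((graphMeasure α Δ N).prod (pairGauss (Finset (Fin N))))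

/-- Disorder-and-graph-averaged two-replica observable under the discrete perturbation
in the diluted model. -/
def dilDiscExp (α : ℕ → ℝ) (Δ N : ℕ) (ρ : ℕ → ℝ → ℝ) (β t : ℝ)
    (f : (Fin N → Bool) → (Fin N → Bool) → ℝ) : ℝ :=
  ∫ ω : (Finset (Fin N) → Bool) ×
      (Finset (Fin N) → ℝ) × (Finset (Fin N) → ℝ) × (Finset (Fin N) → Bool),
    gibbs2 β (ham (edgesOf Δ ω.1) ρ ω.2.1)
      (ham (edgesOf Δ ω.1) ρ (discPerturb ω.2.1 ω.2.2.1 ω.2.2.2)) f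
    ∂((graphMeasure α Δ N).prod (tripleGaussBer (Finset (Fin N)) (Real.exp (-t))))

/-! ### The Lévy model -/

/-- Hamiltonian of the Lévy model: `H(σ) = a_N⁻¹ Σ_{i,j} ρ(J_{ij}) σ_i σ_j`. -/
def levyHam (N : ℕ) (aN : ℝ) (ρ : ℝ → ℝ) (J : Fin N × Fin N → ℝ) (σ : Fin N → Bool) : ℝ :=
  (∑ p : Fin N × Fin N, ρ (J p) * (spin (σ p.1) * spin (σ p.2))) / aN

/-- The normalization `a_N = inf{x > 0 : P(|ρ(J)| > x) ≤ 1/N}`. -/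
def levyAN (ρ : ℝ → ℝ) (N : ℕ) : ℝ :=
  sInf {x : ℝ | 0 < x ∧ ((gaussianReal 0 1) {j | x < |ρ j|}).toReal ≤ 1 / N}

/-- The coupled free energy `F_N(t,λ)` of the Lévy model, with the two systems
perturbed by the Ornstein–Uhlenbeck flow at time `t`. -/
def levyF (N : ℕ) (β aN lam : ℝ) (ρ : ℝ → ℝ) (t : ℝ) : ℝ :=
  (∫ ω : (Fin N × Fin N → ℝ) × (Fin N × Fin N → ℝ) × (Fin N × Fin N → ℝ),
      Real.log (∑ σ : Fin N → Bool, ∑ τ : Fin N → Bool,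
        Real.exp (β * levyHam N aN ρ (fun p => Real.exp (-t / 2) * ω.1 p +
              Real.sqrt (1 - Real.exp (-t)) * ω.2.1 p) σ +
          β * levyHam N aN ρ (fun p => Real.exp (-t / 2) * ω.1 p +
              Real.sqrt (1 - Real.exp (-t)) * ω.2.2 p) τ +
          lam * N * overlap σ τ ^ 2))
    ∂tripleGauss (Fin N × Fin N)) / N

/-- The coupled free energy `F_N(∞,λ)`: the two systems carry independent disorders. -/
def levyFinf (N : ℕ) (β aN lam : ℝ) (ρ : ℝ → ℝ) : ℝ :=
  (∫ ω : (Fin N × Fin N → ℝ) × (Fin N × Fin N → ℝ) × (Fin N × Fin N → ℝ),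
      Real.log (∑ σ : Fin N → Bool, ∑ τ : Fin N → Bool,
        Real.exp (β * levyHam N aN ρ ω.2.1 σ + β * levyHam N aN ρ ω.2.2 τ +
          lam * N * overlap σ τ ^ 2))
    ∂tripleGauss (Fin N × Fin N)) / N

/-- `φ(t) = Σ_r E[L_r(J¹(t)) L_r(J²(t))]` where `J^i(t) = e^{-t/2} J + √(1-e^{-t}) J^i`. -/
def phiFn (k m : ℕ) (L : Fin m → (Fin k → ℝ) → ℝ) (t : ℝ) : ℝ :=
  ∑ r : Fin m, ∫ ω : (Fin k → ℝ) × (Fin k → ℝ) × (Fin k → ℝ),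
    L r (fun l => Real.exp (-t / 2) * ω.1 l + Real.sqrt (1 - Real.exp (-t)) * ω.2.1 l) *
      L r (fun l => Real.exp (-t / 2) * ω.1 l + Real.sqrt (1 - Real.exp (-t)) * ω.2.2 l)
    ∂tripleGauss (Fin k)

/-! With probability `e^{-t|E|}` none of the couplings `J_e`, `e ∈ E`, is resampled; on that
event `J(t)` and `J` define the same Hamiltonian, so the two-replica average equals the
unperturbed one. The observable `R²` is nonnegative, so the complementary event only adds,
and `e^{-t|E|} ≥ e^{-1}` when `t|E| ≤ 1`. -/

section GibbsAverage

variable {N : ℕ} {β C : ℝ} {H₁ H₂ : (Fin N → Bool) → ℝ}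
  {f : (Fin N → Bool) → (Fin N → Bool) → ℝ}

lemma gibbs2_le_of_le (hf : ∀ σ τ, f σ τ ≤ C) : gibbs2 β H₁ H₂ f ≤ C := by
  rw [gibbs2, div_le_iff₀ (by positivity), Finset.mul_sum]
  refine Finset.sum_le_sum fun σ _ => ?_
  rw [Finset.mul_sum]
  exact Finset.sum_le_sum fun τ _ =>
    mul_le_mul_of_nonneg_right (hf σ τ) (Real.exp_pos _).le

lemma le_gibbs2_of_le (hf : ∀ σ τ, C ≤ f σ τ) : C ≤ gibbs2 β H₁ H₂ f := by
  rw [gibbs2, le_div_iff₀ (by positivity), Finset.mul_sum]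
  refine Finset.sum_le_sum fun σ _ => ?_
  rw [Finset.mul_sum]
  exact Finset.sum_le_sum fun τ _ =>
    mul_le_mul_of_nonneg_right (hf σ τ) (Real.exp_pos _).le

lemma exists_abs_gibbs2_le (f : (Fin N → Bool) → (Fin N → Bool) → ℝ) :
    ∃ C, ∀ β H₁ H₂, |gibbs2 β H₁ H₂ f| ≤ C := by
  obtain ⟨C, hC⟩ := Finite.bddAbove_range fun στ => |Function.uncurry f στ|
  have hfC : ∀ σ τ, |f σ τ| ≤ C := fun σ τ => hC ⟨(σ, τ), rfl⟩
  exact ⟨C, fun β H₁ H₂ => abs_le.mpr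
    ⟨le_gibbs2_of_le fun σ τ => (abs_le.mp (hfC σ τ)).1,
      gibbs2_le_of_le fun σ τ => (abs_le.mp (hfC σ τ)).2⟩⟩

end GibbsAverage

lemma ham_congr {N : ℕ} {Edges : Finset (Finset (Fin N))} (ρ : ℕ → ℝ → ℝ)
    {J J' : Finset (Fin N) → ℝ} (h : ∀ e ∈ Edges, J e = J' e) :
    ham Edges ρ J = ham Edges ρ J' :=
  funext fun _ => Finset.sum_congr rfl fun e he => by rw [h e he]

section Measurability

variable {α : Type*} [MeasurableSpace α] {N : ℕ} (Edges : Finset (Finset (Fin N)))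
  {ρ : ℕ → ℝ → ℝ} {g h : α → Finset (Fin N) → ℝ}

lemma measurable_ham (hρ : ∀ p, Measurable (ρ p)) (hg : Measurable g) (σ : Fin N → Bool) :
    Measurable fun ω => ham Edges ρ (g ω) σ :=
  Finset.measurable_sum _ fun e _ =>
    ((hρ e.card).comp ((measurable_pi_apply e).comp hg)).mul_const _

lemma measurable_gibbs2_ham (hρ : ∀ p, Measurable (ρ p)) (β : ℝ)
    (f : (Fin N → Bool) → (Fin N → Bool) → ℝ) (hg : Measurable g) (hh : Measurable h) :
    Measurable fun ω => gibbs2 β (ham Edges ρ (g ω)) (ham Edges ρ (h ω)) f := by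
  have hweight : ∀ σ τ, Measurable fun ω =>
      Real.exp (β * ham Edges ρ (g ω) σ + β * ham Edges ρ (h ω) τ) := fun σ τ =>
    (((measurable_ham Edges hρ hg σ).const_mul β).add
      ((measurable_ham Edges hρ hh τ).const_mul β)).exp
  exact (Finset.measurable_sum _ fun σ _ => Finset.measurable_sum _ fun τ _ =>
      (hweight σ τ).const_mul _).div
    (Finset.measurable_sum _ fun σ _ => Finset.measurable_sum _ fun τ _ => hweight σ τ)

lemma integrable_gibbs2_ham {μ : Measure α} [IsFiniteMeasure μ]
    (hρ : ∀ p, Measurable (ρ p)) (β : ℝ)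
    (f : (Fin N → Bool) → (Fin N → Bool) → ℝ) (hg : Measurable g) (hh : Measurable h) :
    Integrable (fun ω => gibbs2 β (ham Edges ρ (g ω)) (ham Edges ρ (h ω)) f) μ := by
  obtain ⟨C, hC⟩ := exists_abs_gibbs2_le f
  exact .of_bound (measurable_gibbs2_ham Edges hρ β f hg hh).aestronglyMeasurable C
    (ae_of_all _ fun ω => hC _ _ _)

end Measurability

lemma measurable_discPerturb {α ι : Type*} [MeasurableSpace α] {g h : α → ι → ℝ}
    {b : α → ι → Bool} (hg : Measurable g) (hh : Measurable h) (hb : Measurable b) :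
    Measurable fun ω => discPerturb (g ω) (h ω) (b ω) :=
  measurable_pi_lambda _ fun e =>
    Measurable.ite (((measurable_pi_apply e).comp hb) (measurableSet_singleton true))
      ((measurable_pi_apply e).comp hg) ((measurable_pi_apply e).comp hh)

section Bernoulli

variable {p : ℝ}

lemma berBool_singleton_true : berBool p {true} = ENNReal.ofReal p := by
  simp [berBool]

lemma isProbabilityMeasure_berBool (hp0 : 0 ≤ p) (hp1 : p ≤ 1) :
    IsProbabilityMeasure (berBool p) := by
  constructor
  simp only [berBool, Measure.coe_add, Pi.add_apply, Measure.smul_apply, smul_eq_mul,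
    measure_univ, mul_one]
  rw [← ENNReal.ofReal_add hp0 (by linarith)]
  norm_num

lemma pi_berBool_forall_true {ι : Type*} [Fintype ι] (hp0 : 0 ≤ p) (hp1 : p ≤ 1)
    (s : Finset ι) :
    Measure.pi (fun _ : ι => berBool p) {B | ∀ e ∈ s, B e = true}
      = ENNReal.ofReal p ^ s.card := by
  classical
  have := isProbabilityMeasure_berBool hp0 hp1
  have hpi : {B : ι → Bool | ∀ e ∈ s, B e = true}
      = Set.univ.pi fun e => if e ∈ s then {true} else Set.univ := by
    ext B
    simp only [Set.mem_ofPred_eq, Set.mem_univ_pi]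
    refine forall_congr' fun e => ?_
    split_ifs <;> simp [*]
  rw [hpi, Measure.pi_pi]
  simp only [apply_ite (berBool p), berBool_singleton_true, measure_univ]
  rw [Finset.prod_ite_mem, Finset.univ_inter, Finset.prod_const]

end Bernoulli

theorem pow_card_mul_integral_gibbs2_le_discExp {N : ℕ} (Edges : Finset (Finset (Fin N)))
    {ρ : ℕ → ℝ → ℝ} (hρ : ∀ p, Measurable (ρ p)) (β : ℝ) {t : ℝ} (ht : 0 ≤ t)
    {f : (Fin N → Bool) → (Fin N → Bool) → ℝ} (hf : ∀ σ τ, 0 ≤ f σ τ) :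
    Real.exp (-t) ^ Edges.card *
        ∫ J, gibbs2 β (ham Edges ρ J) (ham Edges ρ J) f ∂gaussianPi (Finset (Fin N))
      ≤ discExp Edges ρ β t f := by
  set p := Real.exp (-t)
  have hp0 : 0 ≤ p := (Real.exp_pos _).le
  have hp1 : p ≤ 1 := Real.exp_le_one_iff.mpr (by linarith)
  have := isProbabilityMeasure_berBool hp0 hp1
  have : IsProbabilityMeasure (tripleGaussBer (Finset (Fin N)) p) := by
    unfold tripleGaussBer; infer_instance
  set G := fun J => gibbs2 β (ham Edges ρ J) (ham Edges ρ J) f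
  set S : Set ((Finset (Fin N) → ℝ) × (Finset (Fin N) → Bool)) :=
    Set.univ ×ˢ {B | ∀ e ∈ Edges, B e = true}
  have hS : MeasurableSet S := MeasurableSet.univ.prod (Set.toFinite _).measurableSet
  have hSprob : ((gaussianPi _).prod (Measure.pi fun _ => berBool p)).real S
      = p ^ Edges.card := by
    rw [measureReal_prod_prod, measureReal_def, measureReal_def, pi_berBool_forall_true hp0 hp1,
      measure_univ, ENNReal.toReal_pow, ENNReal.toReal_ofReal hp0, ENNReal.toReal_one, one_mul]
  have hlower :
      ∀ ω : (Finset (Fin N) → ℝ) × (Finset (Fin N) → ℝ) × (Finset (Fin N) → Bool),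
        G ω.1 * S.indicator 1 ω.2
          ≤ gibbs2 β (ham Edges ρ ω.1) (ham Edges ρ (discPerturb ω.1 ω.2.1 ω.2.2)) f := by
    intro ω
    by_cases hω : ω.2 ∈ S
    · have hB : ∀ e ∈ Edges, ω.2.2 e = true := hω.2
      rw [Set.indicator_of_mem hω, Pi.one_apply, mul_one,
        ham_congr ρ (J := discPerturb ω.1 ω.2.1 ω.2.2) fun e he => if_pos (hB e he)]
    · rw [Set.indicator_of_notMem hω, mul_zero]
      exact le_gibbs2_of_le hf
  calc p ^ Edges.card * ∫ J, G J ∂gaussianPi (Finset (Fin N))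
      = ∫ ω, G ω.1 * S.indicator 1 ω.2 ∂tripleGaussBer (Finset (Fin N)) p := by
        rw [tripleGaussBer, integral_prod_mul, integral_indicator_one hS, hSprob, mul_comm]
    _ ≤ discExp Edges ρ β t f :=
        integral_mono_of_nonneg
          (ae_of_all _ fun ω => mul_nonneg (le_gibbs2_of_le hf) (Set.indicator_nonneg
            (fun _ _ => zero_le_one) _))
          (integrable_gibbs2_ham Edges hρ β f measurable_fst
            (measurable_discPerturb measurable_fst (measurable_fst.comp measurable_snd)
              (measurable_snd.comp measurable_snd)))
          (ae_of_all _ hlower)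

theorem stmt18_general
    (N : ℕ)
    (Edges : Finset (Finset (Fin N)))
    (ρ : ℕ → ℝ → ℝ) (hρmeas : ∀ p, Measurable (ρ p))
    (t β : ℝ) (ht0 : 0 ≤ t) (ht : t ≤ ((Edges.card : ℝ))⁻¹) :
    Real.exp (-1) *
        (∫ ω, gibbs2 β (ham Edges ρ ω) (ham Edges ρ ω) (fun σ τ => overlap σ τ ^ 2)
          ∂gaussianPi (Finset (Fin N)))
      ≤ discExp Edges ρ β t (fun σ τ => overlap σ τ ^ 2) := by
  have htcard : (Edges.card : ℝ) * t ≤ 1 :=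
    mul_le_of_le_inv_mul₀ zero_le_one (Nat.cast_nonneg _) (by rwa [mul_one])
  have hexp : Real.exp (-1) ≤ Real.exp (-t) ^ Edges.card := by
    rw [← Real.exp_nat_mul, Real.exp_le_exp]
    linarith
  exact (mul_le_mul_of_nonneg_right hexp
      (integral_nonneg fun _ => le_gibbs2_of_le fun _ _ => sq_nonneg _)).trans
    (pow_card_mul_integral_gibbs2_le_discExp Edges hρmeas β ht0 fun _ _ => sq_nonneg _)

/-- In the generalized short-range model under the discrete perturbation,
if `0 ≤ t ≤ |E|⁻¹`, then `E⟨R(σ,τ)²⟩_t ≥ e⁻¹ E⟨R(σ¹,σ²)²⟩`. -/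
theorem stmt18
    (N Δ : ℕ) (hN : 1 ≤ N) (hΔ : 2 ≤ Δ)
    (Edges : Finset (Finset (Fin N)))
    (hcard : ∀ e ∈ Edges, 2 ≤ e.card ∧ e.card ≤ Δ)
    (ρ : ℕ → ℝ → ℝ) (hρmeas : ∀ p, Measurable (ρ p))
    (hρodd : ∀ p x, ρ p (-x) = - ρ p x)
    (t β : ℝ) (ht0 : 0 ≤ t) (ht : t ≤ ((Edges.card : ℝ))⁻¹) (hβ : 0 ≤ β) :
    Real.exp (-1) *
        (∫ ω, gibbs2 β (ham Edges ρ ω) (ham Edges ρ ω) (fun σ τ => overlap σ τ ^ 2)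
          ∂gaussianPi (Finset (Fin N)))
      ≤ discExp Edges ρ β t (fun σ τ => overlap σ τ ^ 2) :=
  stmt18_general N Edges ρ hρmeas t β ht0 ht
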